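/- Existence of normal forms: let A be a subalgebra of MvPolynomial σ k. For every polynomial f ∈ MvPolynomial σ k there exists a polynomial r such that f − r ∈ A and for every exponent vector d in the support of r, the monomial x^d does not lie in the initial algebra in_m(A). -/

import Mathlib

/-!
The `m`-degrees of the nonzero elements of `A` form an additive monoid `S`, since degrees add
under multiplication. Hence every leading term of `A`, and so all of `in_m(A)`, is supported on
`S`; in particular `x^d ∈ in_m(A)` forces `d ∈ S`. Conversely, every monomial `x^d` lies in
`A + span {x^e | e ∉ S}`, by well-founded induction on `d`: if `d = deg a` with `a ∈ A`, then
`x^d` is `a / lc(a)` minus a combination of monomials smaller than `d`. Splitting `f = a + r`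
accordingly gives the normal form `r`.
-/

open MvPolynomial

noncomputable section

variable {σ : Type*} [Fintype σ] {k : Type*} [Field k]

/-- The degree (largest exponent vector) of a polynomial with respect to a monomial order. -/
def MonomialOrder.degree' (m : MonomialOrder σ) (f : MvPolynomial σ k) : σ →₀ ℕ :=
  m.toSyn.symm (f.support.sup fun d => m.toSyn d)

/-- The leading term of a polynomial with respect to a monomial order. -/
def MonomialOrder.leadTerm (m : MonomialOrder σ) (f : MvPolynomial σ k) : MvPolynomial σ k :=
  monomial (m.degree' f) (f.coeff (m.degree' f))

/-- The initial algebra of a subalgebra `A`: the `k`-subalgebra generated by the leading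
terms of the nonzero elements of `A`. -/
def MonomialOrder.initialAlgebra (m : MonomialOrder σ) (A : Subalgebra k (MvPolynomial σ k)) :
    Subalgebra k (MvPolynomial σ k) :=
  Algebra.adjoin k {p | ∃ a ∈ A, a ≠ 0 ∧ p = m.leadTerm a}

open scoped MonomialOrder Pointwise

namespace MvPolynomial

variable {σ R : Type*} [CommSemiring R]

theorem restrictSupport_le_of_monomial_mem {s : Set (σ →₀ ℕ)} {W : Submodule R (MvPolynomial σ R)}
    (h : ∀ d ∈ s, monomial d (1 : R) ∈ W) : restrictSupport R s ≤ W := by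
  rw [restrictSupport_eq_span, Submodule.span_le]
  rintro _ ⟨d, hd, rfl⟩
  exact h d hd

def restrictSupportSubalgebra (S : AddSubmonoid (σ →₀ ℕ)) : Subalgebra R (MvPolynomial σ R) :=
  (restrictSupport R (S : Set (σ →₀ ℕ))).toSubalgebra
    (by simpa using (monomial_mem_restrictSupport (R := R) (r := 1)).2 (Or.inl S.zero_mem))
    (fun {p q} hp hq => by
      have hpq : p * q ∈ restrictSupport R ((S : Set (σ →₀ ℕ)) + (S : Set (σ →₀ ℕ))) := by
        rw [restrictSupport_add]
        exact Submodule.mul_mem_mul hp hq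
      exact restrictSupport_mono R (Set.add_subset_iff.2 fun _ hx _ hy => S.add_mem hx hy) hpq)

end MvPolynomial

namespace MonomialOrder

variable {σ R : Type*} (m : MonomialOrder σ)

theorem submodule_eq_top_of_monomial_mem [CommSemiring R] {W : Submodule R (MvPolynomial σ R)}
    (h : ∀ d, (∀ e, e ≺[m] d → monomial e (1 : R) ∈ W) → monomial d 1 ∈ W) : W = ⊤ := by
  have hmon : ∀ d, monomial d (1 : R) ∈ W := fun d =>
    (InvImage.wf m.toSyn wellFounded_lt).induction d fun d ih => h d ih
  exact Submodule.eq_top_iff'.2 fun f =>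
    restrictSupport_le_of_monomial_mem (fun d _ => hmon d) ((mem_restrictSupport_iff R).2 subset_rfl)

theorem sub_leadingTerm_mem_restrictSupport [CommRing R] (f : MvPolynomial σ R) :
    f - m.leadingTerm f ∈ restrictSupport R {e | e ≺[m] m.degree f} := by
  classical
  rw [mem_restrictSupport_iff]
  intro e he
  rw [Finset.mem_coe, mem_support_iff, coeff_sub, leadingTerm, coeff_monomial] at he
  have hne : m.degree f ≠ e := fun hde => he (by rw [if_pos hde, leadingCoeff, hde, sub_self])
  rw [if_neg hne, sub_zero] at he
  exact lt_of_le_of_ne (m.le_degree (mem_support_iff.2 he)) fun h => hne (m.toSyn.injective h).symm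

def degreeSubmonoid [CommSemiring R] [NoZeroDivisors R] [Nontrivial R]
    (A : Subalgebra R (MvPolynomial σ R)) : AddSubmonoid (σ →₀ ℕ) where
  carrier := {d | ∃ a ∈ A, a ≠ 0 ∧ m.degree a = d}
  zero_mem' := ⟨1, A.one_mem, one_ne_zero, m.degree_one⟩
  add_mem' := by
    rintro _ _ ⟨a, ha, ha0, rfl⟩ ⟨b, hb, hb0, rfl⟩
    exact ⟨a * b, A.mul_mem ha hb, mul_ne_zero ha0 hb0, m.degree_mul ha0 hb0⟩

theorem toSubmodule_sup_restrictSupport_compl_degreeSubmonoid_eq_top {k : Type*} [Field k]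
    (A : Subalgebra k (MvPolynomial σ k)) :
    Subalgebra.toSubmodule A ⊔ restrictSupport k (m.degreeSubmonoid A : Set (σ →₀ ℕ))ᶜ = ⊤ := by
  refine m.submodule_eq_top_of_monomial_mem fun d ih => ?_
  by_cases hd : d ∈ m.degreeSubmonoid A
  · obtain ⟨a, ha, ha0, rfl⟩ := hd
    have hlc : m.leadingCoeff a ≠ 0 := m.leadingCoeff_ne_zero_iff.2 ha0
    have hlower : a - m.leadingTerm a ∈ Subalgebra.toSubmodule A ⊔
        restrictSupport k (m.degreeSubmonoid A : Set (σ →₀ ℕ))ᶜ :=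
      restrictSupport_le_of_monomial_mem ih
        (m.sub_leadingTerm_mem_restrictSupport a)
    have hmon : monomial (m.degree a) (1 : k) =
        (m.leadingCoeff a)⁻¹ • (a - (a - m.leadingTerm a)) := by
      rw [sub_sub_cancel, leadingTerm, smul_monomial, smul_eq_mul, inv_mul_cancel₀ hlc]
    rw [hmon]
    exact Submodule.smul_mem _ _ (Submodule.sub_mem _ (Submodule.mem_sup_left ha) hlower)
  · exact Submodule.mem_sup_right ((monomial_mem_restrictSupport k).2 (Or.inl hd))

theorem leadTerm_mem_restrictSupportSubalgebra [Fintype σ] {k : Type*} [Field k]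
    {A : Subalgebra k (MvPolynomial σ k)} {a : MvPolynomial σ k} (ha : a ∈ A) (ha0 : a ≠ 0) :
    m.leadTerm a ∈ restrictSupportSubalgebra (m.degreeSubmonoid A) :=
  (monomial_mem_restrictSupport k).2 (Or.inl ⟨a, ha, ha0, rfl⟩)

theorem initialAlgebra_le_restrictSupportSubalgebra [Fintype σ] {k : Type*} [Field k]
    (A : Subalgebra k (MvPolynomial σ k)) :
    m.initialAlgebra A ≤ restrictSupportSubalgebra (m.degreeSubmonoid A) :=
  Algebra.adjoin_le fun _ ⟨_, ha, ha0, hp⟩ => hp ▸ m.leadTerm_mem_restrictSupportSubalgebra ha ha0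

theorem mem_degreeSubmonoid_of_monomial_mem_initialAlgebra [Fintype σ] {k : Type*} [Field k]
    {A : Subalgebra k (MvPolynomial σ k)} {d : σ →₀ ℕ}
    (hd : monomial d (1 : k) ∈ m.initialAlgebra A) : d ∈ m.degreeSubmonoid A :=
  ((monomial_mem_restrictSupport k).1
    (m.initialAlgebra_le_restrictSupportSubalgebra A hd)).resolve_right one_ne_zero

end MonomialOrder

/-- Existence of normal forms. -/
theorem normalForm_exists (m : MonomialOrder σ) (A : Subalgebra k (MvPolynomial σ k))
    (f : MvPolynomial σ k) :
    ∃ r : MvPolynomial σ k, f - r ∈ A ∧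
      ∀ d ∈ r.support, (monomial d (1 : k)) ∉ m.initialAlgebra A := by
  obtain ⟨a, ha, r, hr, rfl⟩ := Submodule.mem_sup.1
    (m.toSubmodule_sup_restrictSupport_compl_degreeSubmonoid_eq_top A ▸ Submodule.mem_top (x := f))
  refine ⟨r, by simpa using ha, fun d hd hmem => ?_⟩
  exact hr hd (m.mem_degreeSubmonoid_of_monomial_mem_initialAlgebra hmem)
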